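/- Let Γ consist of Π₁ formulas and c an atom. Then Γ ⊢ c is derivable in minimal first-order logic iff there is ψ = ∀ȳ₁(σ₁ → ∀ȳ₂(σ₂ → ⋯ → ∀ȳ_k(σ_k → b)⋯)) in Γ and a substitution of variables x̄ for ȳ such that b[ȳ:=x̄] = c and, writing σᵢ = τ₁ⁱ → ⋯ → τ_{qᵢ}ⁱ → aᵢ, each judgment Γ, τ₁ⁱ[ȳ:=x̄], …, τ_{qᵢ}ⁱ[ȳ:=x̄] ⊢ aᵢ[ȳ:=x̄] is derivable. -/

import Mathlib

namespace MFOL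

/-- Formulas of minimal first-order logic (→ and ∀ only, no function symbols),
in de Bruijn representation; individual terms are just variables `ℕ`. -/
inductive Form where
  | atom : ℕ → List ℕ → Form
  | imp : Form → Form → Form
  | all : Form → Form
deriving DecidableEq

def upRen (σ : ℕ → ℕ) : ℕ → ℕ
  | 0 => 0
  | n + 1 => σ n + 1

/-- Capture-avoiding (simultaneous) substitution of variables for variables. -/
def substF : (ℕ → ℕ) → Form → Form
  | σ, .atom p args => .atom p (args.map σ)
  | σ, .imp a b => .imp (substF σ a) (substF σ b)
  | σ, .all a => .all (substF (upRen σ) a)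

/-- Substitution of the variable `x` for the outermost bound variable. -/
def subst0 (x : ℕ) : Form → Form :=
  substF (fun n => match n with | 0 => x | n + 1 => n)

def shiftF : Form → Form := substF Nat.succ

/-- Natural deduction for minimal first-order logic. -/
inductive Prv : Set Form → Form → Prop
  | ax {Γ : Set Form} {φ : Form} : φ ∈ Γ → Prv Γ φ
  | impI {Γ : Set Form} {φ ψ : Form} : Prv (insert φ Γ) ψ → Prv Γ (.imp φ ψ)
  | impE {Γ : Set Form} {φ ψ : Form} : Prv Γ (.imp φ ψ) → Prv Γ φ → Prv Γ ψ
  | allI {Γ : Set Form} {φ : Form} : Prv (shiftF '' Γ) φ → Prv Γ (.all φ)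
  | allE {Γ : Set Form} {φ : Form} (x : ℕ) : Prv Γ (.all φ) → Prv Γ (subst0 x φ)

mutual
  /-- The Σ₁ class of the Mints hierarchy: Σ₁ ::= a | Π₁ → Σ₁. -/
  inductive IsSigma1 : Form → Prop
    | atom (p : ℕ) (args : List ℕ) : IsSigma1 (.atom p args)
    | imp {τ σ : Form} : IsPi1 τ → IsSigma1 σ → IsSigma1 (.imp τ σ)
  /-- The Π₁ class of the Mints hierarchy: Π₁ ::= a | Σ₁ → Π₁ | ∀x.Π₁. -/
  inductive IsPi1 : Form → Prop
    | atom (p : ℕ) (args : List ℕ) : IsPi1 (.atom p args)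
    | imp {σ π : Form} : IsSigma1 σ → IsPi1 π → IsPi1 (.imp σ π)
    | all {π : Form} : IsPi1 π → IsPi1 (.all π)
end

def IsAtomF (f : Form) : Prop := ∃ p args, f = Form.atom p args

/-- Premises τ₁,…,τ_q of a Σ₁ formula τ₁ → ⋯ → τ_q → c. -/
def premsOf : Form → List Form
  | .imp a b => a :: premsOf b
  | .atom p args => []
  | .all a => []

/-- Target atom of a Σ₁ formula. -/
def targetOf : Form → Form
  | .imp _ b => targetOf b
  | f => f

/-- `Unfolds ψ prems b` : instantiating the ∀-blocks of the Π₁ formula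
`ψ = ∀ȳ₁(σ₁ → ∀ȳ₂(σ₂ → ⋯ → ∀ȳ_k(σ_k → b')⋯))` at some variables x̄
yields the list of (instantiated) premises `prems = [σ₁[ȳ:=x̄],…]` and
the (instantiated) target atom `b = b'[ȳ:=x̄]`. -/
inductive Unfolds : Form → List Form → Form → Prop
  | atom (p : ℕ) (args : List ℕ) : Unfolds (.atom p args) [] (.atom p args)
  | imp {σ ψ : Form} {prems : List Form} {b : Form} :
      Unfolds ψ prems b → Unfolds (.imp σ ψ) (σ :: prems) b
  | all {ψ : Form} {prems : List Form} {b : Form} (x : ℕ) :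
      Unfolds (subst0 x ψ) prems b → Unfolds (.all ψ) prems b

/-- `closedAt k φ`: all free de Bruijn indices of `φ` are `< k`. -/
def closedAt : ℕ → Form → Prop
  | k, .atom _ args => ∀ x ∈ args, x < k
  | k, .imp a b => closedAt k a ∧ closedAt k b
  | k, .all a => closedAt (k + 1) a

/-!
The proof is semantic. Take the Kripke model whose worlds are contexts ordered by inclusion
and in which an atom is forced at `Δ` exactly when it has a derivation of the shape on the
right-hand side (`Neutral Δ`). Soundness then turns `Γ ⊢ c` into `Neutral Γ c` as soon as every
formula of `Γ` is forced at `Γ`. For Π₁ formulas this holds because a formula that can be used as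
a hypothesis is forced (reflection); reflection at `σ → π` needs, conversely, that a forced Σ₁
formula `σ` is derivable from its premises (reification), and the two are proved together along
the Mints hierarchy.
-/

def scons (x : ℕ) (ρ : ℕ → ℕ) : ℕ → ℕ
  | 0 => x
  | n + 1 => ρ n

theorem Prv.mono {Δ : Set Form} {φ : Form} (h : Prv Δ φ) {Δ' : Set Form} (hΔ : Δ ⊆ Δ') :
    Prv Δ' φ := by
  induction h generalizing Δ' with
  | ax hm => exact .ax (hΔ hm)
  | impI _ ih => exact .impI (ih (Set.insert_subset_insert hΔ))
  | impE _ _ ih₁ ih₂ => exact .impE (ih₁ hΔ) (ih₂ hΔ)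
  | allI _ ih => exact .allI (ih (Set.image_mono hΔ))
  | allE x _ ih => exact .allE x (ih hΔ)

theorem upRen_comp (σ τ : ℕ → ℕ) : upRen σ ∘ upRen τ = upRen (σ ∘ τ) := by
  funext n; cases n <;> rfl

theorem upRen_id : upRen id = id := by
  funext n; cases n <;> rfl

theorem substF_substF (σ τ : ℕ → ℕ) (φ : Form) :
    substF σ (substF τ φ) = substF (σ ∘ τ) φ := by
  induction φ generalizing σ τ with
  | atom p args => simp [substF]
  | imp a b iha ihb => simp [substF, iha, ihb]
  | all a ih => simp [substF, ih, upRen_comp]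

theorem substF_id (φ : Form) : substF id φ = φ := by
  induction φ with
  | atom p args => simp [substF]
  | imp a b iha ihb => simp [substF, iha, ihb]
  | all a ih => simp [substF, upRen_id, ih]

theorem subst0_eq_substF_scons (x : ℕ) (φ : Form) : subst0 x φ = substF (scons x id) φ := by
  unfold subst0; congr 1

theorem scons_comp_upRen (x : ℕ) (ρ σ : ℕ → ℕ) : scons x ρ ∘ upRen σ = scons x (ρ ∘ σ) := by
  funext n; cases n <;> rfl

theorem comp_scons_id (x : ℕ) (ρ : ℕ → ℕ) : ρ ∘ scons x id = scons (ρ x) ρ := by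
  funext n; cases n <;> rfl

theorem substF_scons (x : ℕ) (ρ : ℕ → ℕ) (φ : Form) :
    substF (scons x ρ) φ = subst0 x (substF (upRen ρ) φ) := by
  rw [subst0_eq_substF_scons, substF_substF, scons_comp_upRen, Function.id_comp]

theorem union_premsOf_imp (Δ : Set Form) (a b : Form) :
    Δ ∪ {τ | τ ∈ premsOf (.imp a b)} = insert a Δ ∪ {τ | τ ∈ premsOf b} := by
  ext τ; simp only [premsOf, Set.mem_union, Set.mem_insert_iff, Set.mem_ofPred_eq,
    List.mem_cons]; tauto

theorem Prv.of_premsOf {Δ : Set Form} {σ : Form}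
    (h : Prv (Δ ∪ {τ | τ ∈ premsOf σ}) (targetOf σ)) : Prv Δ σ := by
  induction σ generalizing Δ with
  | imp a b _ ihb => exact .impI (ihb (by rwa [← union_premsOf_imp]))
  | atom | all => simpa [premsOf, targetOf] using h

theorem Unfolds.prv {ψ b : Form} {prems : List Form} (hu : Unfolds ψ prems b) {Δ : Set Form}
    (hψ : Prv Δ ψ) (hprems : ∀ σ ∈ prems, Prv Δ σ) : Prv Δ b := by
  induction hu with
  | atom => exact hψ
  | imp _ ih =>
    exact ih (.impE hψ (hprems _ List.mem_cons_self)) fun τ hτ =>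
      hprems τ (List.mem_cons_of_mem _ hτ)
  | all x _ ih => exact ih (.allE x hψ) hprems

def Neutral (Δ : Set Form) (c : Form) : Prop :=
  ∃ ψ ∈ Δ, ∃ prems : List Form,
    Unfolds ψ prems c ∧ ∀ σ ∈ prems, Prv (Δ ∪ {τ | τ ∈ premsOf σ}) (targetOf σ)

theorem Neutral.mono {Δ Δ' : Set Form} {c : Form} (h : Neutral Δ c) (hΔ : Δ ⊆ Δ') :
    Neutral Δ' c := by
  obtain ⟨ψ, hψ, prems, hu, hprems⟩ := h
  exact ⟨ψ, hΔ hψ, prems, hu, fun σ hσ => (hprems σ hσ).mono (Set.union_subset_union_left _ hΔ)⟩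

theorem Neutral.prv {Δ : Set Form} {c : Form} (h : Neutral Δ c) : Prv Δ c := by
  obtain ⟨ψ, hψ, prems, hu, hprems⟩ := h
  exact hu.prv (.ax hψ) fun σ hσ => .of_premsOf (hprems σ hσ)

def Force : Set Form → (ℕ → ℕ) → Form → Prop
  | Δ, ρ, .atom p args => Neutral Δ (.atom p (args.map ρ))
  | Δ, ρ, .imp a b => ∀ Δ', Δ ⊆ Δ' → Force Δ' ρ a → Force Δ' ρ b
  | Δ, ρ, .all a => ∀ x, Force Δ (scons x ρ) a

theorem force_substF (φ : Form) (Δ : Set Form) (ρ σ : ℕ → ℕ) :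
    Force Δ ρ (substF σ φ) ↔ Force Δ (ρ ∘ σ) φ := by
  induction φ generalizing Δ ρ σ with
  | atom p args => simp [substF, Force]
  | imp a b iha ihb => simp only [substF, Force, iha, ihb]
  | all a ih => simp only [substF, Force, ih, scons_comp_upRen]

theorem Force.mono {φ : Form} {Δ Δ' : Set Form} {ρ : ℕ → ℕ} (h : Force Δ ρ φ) (hΔ : Δ ⊆ Δ') :
    Force Δ' ρ φ := by
  induction φ generalizing Δ Δ' ρ with
  | atom => exact Neutral.mono h hΔ
  | imp => exact fun Δ'' hΔ' => h Δ'' (hΔ.trans hΔ')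
  | all a ih => exact fun x => ih (h x) hΔ

theorem Prv.force {Γ : Set Form} {φ : Form} (h : Prv Γ φ) (Δ : Set Form) (ρ : ℕ → ℕ)
    (hΓ : ∀ γ ∈ Γ, Force Δ ρ γ) : Force Δ ρ φ := by
  induction h generalizing Δ ρ with
  | ax hm => exact hΓ _ hm
  | impI _ ih =>
    refine fun Δ' hΔ ha => ih Δ' ρ ?_
    rintro γ (rfl | hγ)
    · exact ha
    · exact (hΓ γ hγ).mono hΔ
  | impE _ _ ih₁ ih₂ => exact ih₁ Δ ρ hΓ Δ le_rfl (ih₂ Δ ρ hΓ)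
  | allI _ ih =>
    refine fun x => ih Δ (scons x ρ) ?_
    rintro _ ⟨γ, hγ, rfl⟩
    exact (force_substF γ Δ (scons x ρ) Nat.succ).mpr (hΓ γ hγ)
  | allE x _ ih =>
    rw [subst0_eq_substF_scons, force_substF, comp_scons_id]
    exact ih Δ ρ hΓ (ρ x)

def Usable (Δ : Set Form) (φ : Form) : Prop :=
  ∀ Δ', Δ ⊆ Δ' → ∀ (prems : List Form) (b : Form), Unfolds φ prems b →
    (∀ σ ∈ prems, Prv (Δ' ∪ {τ | τ ∈ premsOf σ}) (targetOf σ)) → Neutral Δ' b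

theorem Usable.of_mem {Δ : Set Form} {φ : Form} (hφ : φ ∈ Δ) : Usable Δ φ :=
  fun _ hΔ prems _ hu hprems => ⟨φ, hΔ hφ, prems, hu, hprems⟩

mutual

theorem force_of_usable : ∀ (π : Form), IsPi1 π → ∀ (ρ : ℕ → ℕ) (Δ : Set Form),
    Usable Δ (substF ρ π) → Force Δ ρ π
  | .atom p args, _, ρ, Δ, hu => hu Δ le_rfl [] _ (.atom p (args.map ρ)) (by simp)
  | .imp σ π, .imp hσ hπ, ρ, Δ, hu => by
    intro Δ' hΔ hforce
    refine force_of_usable π hπ ρ Δ' fun Δ'' hΔ' prems b hunf hprems => ?_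
    refine hu Δ'' (hΔ.trans hΔ') _ b hunf.imp ?_
    rintro τ (_ | ⟨_, hτ⟩)
    · exact prv_of_force σ hσ ρ Δ'' (hforce.mono hΔ')
    · exact hprems τ hτ
  | .all π, .all hπ, ρ, Δ, hu => fun x =>
    force_of_usable π hπ (scons x ρ) Δ fun Δ' hΔ prems b hunf hprems =>
      hu Δ' hΔ prems b (.all x (substF_scons x ρ π ▸ hunf)) hprems

theorem prv_of_force : ∀ (σ : Form), IsSigma1 σ → ∀ (ρ : ℕ → ℕ) (Δ : Set Form),
    Force Δ ρ σ → Prv (Δ ∪ {τ | τ ∈ premsOf (substF ρ σ)}) (targetOf (substF ρ σ))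
  | .atom _ _, _, _, _, hσ => hσ.prv.mono Set.subset_union_left
  | .imp τ σ, .imp hτ hσ, ρ, Δ, hforce => by
    have hτforce : Force (insert (substF ρ τ) Δ) ρ τ :=
      force_of_usable τ hτ ρ _ (.of_mem (Set.mem_insert _ _))
    have := prv_of_force σ hσ ρ _ (hforce _ (Set.subset_insert _ _) hτforce)
    rwa [substF, union_premsOf_imp]

end

end MFOL

/-- Generation lemma: for Γ consisting of Π₁ formulas and an atom c, `Γ ⊢ c`
iff some ψ ∈ Γ unfolds (by instantiating its ∀-blocks at variables x̄) to
premises σ₁,…,σ_k and target c, and for each σᵢ = τ₁ⁱ → ⋯ → τ_{qᵢ}ⁱ → aᵢ the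
judgment `Γ, τ₁ⁱ, …, τ_{qᵢ}ⁱ ⊢ aᵢ` is derivable. -/
theorem stmt6 (Γ : Set MFOL.Form) (hΓ : ∀ ψ ∈ Γ, MFOL.IsPi1 ψ)
    (p : ℕ) (args : List ℕ) :
    MFOL.Prv Γ (.atom p args) ↔
      ∃ ψ ∈ Γ, ∃ prems : List MFOL.Form,
        MFOL.Unfolds ψ prems (.atom p args) ∧
        ∀ σ ∈ prems,
          MFOL.Prv (Γ ∪ {τ | τ ∈ MFOL.premsOf σ}) (MFOL.targetOf σ) := by
  refine ⟨fun h => ?_, MFOL.Neutral.prv⟩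
  have hforced : ∀ γ ∈ Γ, MFOL.Force Γ id γ := fun γ hγ =>
    MFOL.force_of_usable γ (hΓ γ hγ) id Γ (by rw [MFOL.substF_id]; exact .of_mem hγ)
  have hc : MFOL.Neutral Γ (.atom p args) := by simpa [MFOL.Force] using h.force Γ id hforced
  exact hc
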